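/- arXiv:1802.09932 — 2 statements merged into one kernel-verified Lean document; each statement's English description precedes it below -/
import Mathlib

section
/- Let f_i : ℝ^d → ℝ be convex and L-smooth, f = (1/n)∑f_i with minimizer x*, and fix x, x̃ ∈ ℝ^d. For each i, with g_i = ∇f_i(x) − ∇f_i(x̃) + ∇f(x̃), it holds that (1/n)∑_{i=1}^n ‖g_i − ∇f(x)‖² ≤ 2L [ f(x̃) − f(x) − ⟨∇f(x), x̃ − x⟩ ]. -/
/-!
Write `Aᵢ = ∇fᵢ(x) − ∇fᵢ(x̃)`. Since `∇f = (1/n) ∑ ∇fᵢ`, the summand `gᵢ − ∇f(x)` is `Aᵢ` minus the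
mean of the `Aᵢ`, and a sum of squared deviations from the mean is at most the sum of squares. Each
`‖Aᵢ‖²` is bounded by `2L` times the Bregman divergence of `fᵢ` (co-coercivity of the gradient of a
convex `L`-smooth function), and the Bregman divergence is linear in the function.
-/

open scoped RealInnerProductSpace
open InnerProductSpace Set

section Variance

variable {ι E : Type*} [Fintype ι] [NormedAddCommGroup E] [InnerProductSpace ℝ E]

theorem sum_norm_sub_sq_eq (A : ι → E) (c : E) :
    ∑ i, ‖A i - c‖ ^ 2 = ∑ i, ‖A i‖ ^ 2 - 2 * ⟪∑ i, A i, c⟫ + Fintype.card ι * ‖c‖ ^ 2 := by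
  simp only [norm_sub_sq_real, Finset.sum_add_distrib, Finset.sum_sub_distrib, sum_inner,
    Finset.sum_const, Finset.card_univ, nsmul_eq_mul, Finset.mul_sum]

theorem sum_norm_sub_average_sq_le (A : ι → E) :
    ∑ i, ‖A i - (Fintype.card ι : ℝ)⁻¹ • ∑ j, A j‖ ^ 2 ≤ ∑ i, ‖A i‖ ^ 2 := by
  have hN : (Fintype.card ι : ℝ) * (Fintype.card ι : ℝ)⁻¹ ^ 2 = (Fintype.card ι : ℝ)⁻¹ := by
    rcases eq_or_ne (Fintype.card ι : ℝ) 0 with h | h <;> field_simp [h]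
  rw [sum_norm_sub_sq_eq, real_inner_smul_right, real_inner_self_eq_norm_sq, norm_smul,
    Real.norm_eq_abs, abs_inv, Nat.abs_cast, mul_pow, ← mul_assoc (Fintype.card ι : ℝ), hN]
  have : 0 ≤ (Fintype.card ι : ℝ)⁻¹ * ‖∑ j, A j‖ ^ 2 := by positivity
  linarith

end Variance

section Smooth

variable {F : Type*} [NormedAddCommGroup F] [InnerProductSpace ℝ F] [CompleteSpace F]
  {f : F → ℝ}

theorem hasDerivAt_comp_add_smul {a v : F} {t : ℝ} (hf : DifferentiableAt ℝ f (a + t • v)) :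
    HasDerivAt (fun s : ℝ => f (a + s • v)) ⟪gradient f (a + t • v), v⟫ t := by
  have hline : HasDerivAt (fun s : ℝ => a + s • v) v t := by
    simpa using ((hasDerivAt_id t).smul_const v).const_add a
  exact hf.hasGradientAt.hasFDerivAt.comp_hasDerivAt t hline

theorem ConvexOn.add_inner_gradient_le (hc : ConvexOn ℝ univ f) {x : F}
    (hf : DifferentiableAt ℝ f x) (y : F) : f x + ⟪gradient f x, y - x⟫ ≤ f y := by
  have hline : ConvexOn ℝ univ fun t : ℝ => f (x + t • (y - x)) := by
    simpa [Function.comp_def, AffineMap.lineMap_apply_module', add_comm] using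
      hc.comp_affineMap (AffineMap.lineMap x y)
  have hderiv := hasDerivAt_comp_add_smul (v := y - x) (t := 0) (by simpa using hf)
  have := hline.le_slope_of_hasDerivAt (mem_univ 0) (mem_univ 1) zero_lt_one hderiv
  simp only [slope_def_field, zero_smul, add_zero, one_smul, add_sub_cancel, sub_zero,
    div_one] at this
  linarith

theorem le_add_inner_gradient_add_sq {L : ℝ} (hf : Differentiable ℝ f)
    (hlip : ∀ a b, ‖gradient f a - gradient f b‖ ≤ L * ‖a - b‖) (y z : F) :
    f z ≤ f y + ⟪gradient f y, z - y⟫ + L / 2 * ‖z - y‖ ^ 2 := by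
  set v := z - y
  let gap : ℝ → ℝ := fun t => f (y + t • v) - t * ⟪gradient f y, v⟫ - L / 2 * t ^ 2 * ‖v‖ ^ 2
  have hgap : ∀ t, HasDerivAt gap
      (⟪gradient f (y + t • v) - gradient f y, v⟫ - L * t * ‖v‖ ^ 2) t := by
    intro t
    refine (((hasDerivAt_comp_add_smul (hf _)).sub ((hasDerivAt_id t).mul_const _)).sub
      (((hasDerivAt_pow 2 t).const_mul (L / 2)).mul_const (‖v‖ ^ 2))).congr_deriv ?_
    rw [inner_sub_left]
    ring
  have hgap_nonpos : ∀ t ∈ interior (Ici (0 : ℝ)),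
      ⟪gradient f (y + t • v) - gradient f y, v⟫ - L * t * ‖v‖ ^ 2 ≤ 0 := by
    intro t ht
    rw [interior_Ici, mem_Ioi] at ht
    rw [sub_nonpos]
    calc ⟪gradient f (y + t • v) - gradient f y, v⟫
        ≤ ‖gradient f (y + t • v) - gradient f y‖ * ‖v‖ := real_inner_le_norm _ _
      _ ≤ L * ‖t • v‖ * ‖v‖ := by gcongr; simpa using hlip (y + t • v) y
      _ = L * t * ‖v‖ ^ 2 := by rw [norm_smul, Real.norm_of_nonneg ht.le]; ring
  have hanti : AntitoneOn gap (Ici 0) :=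
    antitoneOn_of_hasDerivWithinAt_nonpos (convex_Ici 0)
      (fun t _ => (hgap t).continuousAt.continuousWithinAt) (fun t _ => (hgap t).hasDerivWithinAt)
      hgap_nonpos
  have := hanti (mem_Ici.2 le_rfl) (mem_Ici.2 zero_le_one) zero_le_one
  simp only [gap, v, one_smul, zero_smul, add_zero, add_sub_cancel] at this
  linarith

theorem sq_norm_gradient_le_of_forall_le {L : ℝ} (hL : 0 < L) (hf : Differentiable ℝ f)
    (hlip : ∀ a b, ‖gradient f a - gradient f b‖ ≤ L * ‖a - b‖) {x : F} (hmin : ∀ z, f x ≤ f z)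
    (y : F) : ‖gradient f y‖ ^ 2 ≤ 2 * L * (f y - f x) := by
  set g := gradient f y
  -- a gradient step of length `1 / L` from `y` decreases `f` by at least `‖g‖² / (2L)`
  have hstep := le_add_inner_gradient_add_sq hf hlip y (y - L⁻¹ • g)
  rw [sub_sub_cancel_left, inner_neg_right, real_inner_smul_right, real_inner_self_eq_norm_sq,
    norm_neg, norm_smul, Real.norm_of_nonneg (inv_nonneg.2 hL.le)] at hstep
  have hdecrease : L⁻¹ * ‖g‖ ^ 2 - L / 2 * (L⁻¹ * ‖g‖) ^ 2 = ‖g‖ ^ 2 / (2 * L) := by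
    field_simp
    ring
  have := hmin (y - L⁻¹ • g)
  rw [← div_le_iff₀' (by positivity)]
  linarith

theorem hasGradientAt_sub_inner {z : F} (hf : DifferentiableAt ℝ f z) (c : F) :
    HasGradientAt (fun w => f w - ⟪c, w⟫) (gradient f z - c) z := by
  rw [hasGradientAt_iff_hasFDerivAt, map_sub]
  exact hf.hasGradientAt.hasFDerivAt.sub (toDual ℝ F c).hasFDerivAt

theorem sq_norm_gradient_sub_le_bregman {L : ℝ} (hL : 0 < L) (hc : ConvexOn ℝ univ f)
    (hf : Differentiable ℝ f) (hlip : ∀ a b, ‖gradient f a - gradient f b‖ ≤ L * ‖a - b‖)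
    (x y : F) :
    ‖gradient f y - gradient f x‖ ^ 2 ≤ 2 * L * (f y - f x - ⟪gradient f x, y - x⟫) := by
  -- tilting `f` by the linear function `⟪∇f x, ·⟫` makes `x` a global minimiser
  set c := gradient f x
  set φ : F → ℝ := fun w => f w - ⟪c, w⟫
  have hφ_grad : gradient φ = fun w => gradient f w - c :=
    gradient_eq fun w => hasGradientAt_sub_inner (hf w) c
  have hφ_diff : Differentiable ℝ φ := fun w => (hasGradientAt_sub_inner (hf w) c).differentiableAt
  have hφ_conv : ConvexOn ℝ univ φ := hc.sub ((innerₗ F c).concaveOn convex_univ)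
  have hφ_lip : ∀ a b, ‖gradient φ a - gradient φ b‖ ≤ L * ‖a - b‖ := by
    simpa only [hφ_grad, sub_sub_sub_cancel_right] using hlip
  have hφ_min : ∀ z, φ x ≤ φ z := fun z => by
    simpa [hφ_grad, c] using hφ_conv.add_inner_gradient_le (hφ_diff x) z
  have := sq_norm_gradient_le_of_forall_le hL hφ_diff hφ_lip hφ_min y
  rw [hφ_grad] at this
  simp only [φ, inner_sub_right] at this ⊢
  linarith

theorem hasGradientAt_const_mul_sum {ι : Type*} [Fintype ι] {g : ι → F → ℝ} {z : F}
    (hg : ∀ i, DifferentiableAt ℝ (g i) z) (c : ℝ) :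
    HasGradientAt (fun w => c * ∑ i, g i w) (c • ∑ i, gradient (g i) z) z := by
  rw [hasGradientAt_iff_hasFDerivAt, map_smul, map_sum]
  exact (HasFDerivAt.fun_sum fun i _ => (hg i).hasGradientAt.hasFDerivAt).const_mul c

end Smooth

theorem stmt_3_general (d n : ℕ) (L : ℝ) (hL : 0 < L)
    (f : Fin n → EuclideanSpace ℝ (Fin d) → ℝ)
    (hconv : ∀ i, ConvexOn ℝ Set.univ (f i))
    (hdiff : ∀ i, Differentiable ℝ (f i))
    (hlip : ∀ i x y, ‖gradient (f i) x - gradient (f i) y‖ ≤ L * ‖x - y‖)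
    (favg : EuclideanSpace ℝ (Fin d) → ℝ)
    (hfavg : ∀ x, favg x = (1 / n : ℝ) * ∑ i, f i x)
    (x xt : EuclideanSpace ℝ (Fin d)) :
    (1 / n : ℝ) * ∑ i,
        ‖(gradient (f i) x - gradient (f i) xt + gradient favg xt) - gradient favg x‖ ^ 2
      ≤ 2 * L * (favg xt - favg x - ⟪gradient favg x, xt - x⟫) := by
  have hgrad : ∀ z, gradient favg z = (1 / n : ℝ) • ∑ i, gradient (f i) z := fun z =>
    ((hasGradientAt_const_mul_sum (fun i => (hdiff i).differentiableAt) _).congr_of_eventuallyEq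
      (Filter.Eventually.of_forall hfavg)).gradient
  set A : Fin n → EuclideanSpace ℝ (Fin d) := fun i => gradient (f i) x - gradient (f i) xt
  have hdeviation : ∀ i, gradient (f i) x - gradient (f i) xt + gradient favg xt - gradient favg x
      = A i - (Fintype.card (Fin n) : ℝ)⁻¹ • ∑ j, A j := fun i => by
    simp only [hgrad, A, Finset.sum_sub_distrib, Fintype.card_fin, one_div, smul_sub]
    abel
  have hbregman : ∀ i, ‖A i‖ ^ 2 ≤ 2 * L * (f i xt - f i x - ⟪gradient (f i) x, xt - x⟫) :=
    fun i => by
      simpa only [A, norm_sub_rev] using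
        sq_norm_gradient_sub_le_bregman hL (hconv i) (hdiff i) (hlip i) x xt
  calc _ = (1 / n : ℝ) * ∑ i, ‖A i - (Fintype.card (Fin n) : ℝ)⁻¹ • ∑ j, A j‖ ^ 2 := by
        simp only [hdeviation]
    _ ≤ (1 / n : ℝ) * ∑ i, ‖A i‖ ^ 2 :=
        mul_le_mul_of_nonneg_left (sum_norm_sub_average_sq_le A) (by positivity)
    _ ≤ (1 / n : ℝ) * ∑ i, 2 * L * (f i xt - f i x - ⟪gradient (f i) x, xt - x⟫) :=
        mul_le_mul_of_nonneg_left (Finset.sum_le_sum fun i _ => hbregman i) (by positivity)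
    _ = 2 * L * (favg xt - favg x - ⟪gradient favg x, xt - x⟫) := by
        rw [hfavg, hfavg, hgrad, real_inner_smul_left, sum_inner, ← Finset.mul_sum]
        simp only [Finset.sum_sub_distrib]
        ring

/-- tighter (Bregman-divergence) variance bound for the SVRG estimator. -/
theorem stmt_3 (d n : ℕ) (hn : 0 < n) (L : ℝ) (hL : 0 < L)
    (f : Fin n → EuclideanSpace ℝ (Fin d) → ℝ)
    (hconv : ∀ i, ConvexOn ℝ Set.univ (f i))
    (hdiff : ∀ i, Differentiable ℝ (f i))
    (hlip : ∀ i x y, ‖gradient (f i) x - gradient (f i) y‖ ≤ L * ‖x - y‖)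
    (favg : EuclideanSpace ℝ (Fin d) → ℝ)
    (hfavg : ∀ x, favg x = (1 / n : ℝ) * ∑ i, f i x)
    (xstar : EuclideanSpace ℝ (Fin d))
    (hmin : ∀ x, favg xstar ≤ favg x)
    (x xt : EuclideanSpace ℝ (Fin d)) :
    (1 / n : ℝ) * ∑ i,
        ‖(gradient (f i) x - gradient (f i) xt + gradient favg xt) - gradient favg x‖ ^ 2
      ≤ 2 * L * (favg xt - favg x - ⟪gradient favg x, xt - x⟫) :=
  stmt_3_general d n L hL f hconv hdiff hlip favg hfavg x xt
end

section
/- Epoch bound (Option II): Under the setting of VR-SGD with smooth objective f, convex L-smooth components, step size η = 1/(Lβ) with β > 3, epoch length m ≥ 2, and snapshot x̃^s = (1/(m−1))∑_{k=1}^{m−1} x_k^s, one has: (1 − 2/(β−1)) E[f(x̃^s) − f(x*)] + (1/(m−1)) E[f(x_m^s) − f(x*)] ≤ (2m/((β−1)(m−1))) E[f(x̃^{s−1}) − f(x*)] + (2/((β−1)(m−1))) E[f(x_0^s) − f(x*)] + (Lβ/(2(m−1))) E[‖x* − x_0^s‖² − ‖x* − x_m^s‖²]. -/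
/-!
One inner step from `y` with the SVRG estimator `g = ∇fᵢ(y) - ∇fᵢ(x̃) + ∇f(x̃)`: since `g` is
unbiased, smoothness and convexity of `f` give, on average over `i`,
`2η (f(y⁺) - f(x⋆)) + ‖x⋆ - y⁺‖² ≤ ‖x⋆ - y‖² + (η² + Lη³) ‖g‖²`,
and co-coercivity of the `∇fᵢ` bounds the second moment,
`E ‖g‖² ≤ 4L ((f(y) - f(x⋆)) + (f(x̃) - f(x⋆)))`. For `η = 1/(Lβ)` this becomes
`(β-1) E[f(x_{k+1}) - f(x⋆)] + C E‖x⋆ - x_{k+1}‖²`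
`  ≤ C E‖x⋆ - x_k‖² + 2 E[f(x_k) - f(x⋆)] + 2 (f(x̃) - f(x⋆))`
with `C = Lβ(β-1)/2`; it survives the expectation over all indices because `x_k` does not
depend on `i_k`. Summed over the epoch the distances telescope, and Jensen's inequality for the
averaged snapshot gives the bound.
-/

open scoped BigOperators RealInnerProductSpace
open Finset

theorem ConvexOn.fun_sum {V κ : Type*} [AddCommGroup V] [Module ℝ V] {s : Finset κ} {t : Set V}
    {φ : κ → V → ℝ} (hφ : ∀ i ∈ s, ConvexOn ℝ t (φ i)) (ht : Convex ℝ t) :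
    ConvexOn ℝ t fun z => ∑ i ∈ s, φ i z := by
  classical
  induction s using Finset.induction_on with
  | empty => simpa using convexOn_const 0 ht
  | insert j s hj ih =>
    simp only [sum_insert hj]
    exact (hφ j (mem_insert_self j s)).add (ih fun i hi => hφ i (mem_insert_of_mem hi))

theorem expect_expect_eq_expect_apply {ι α M : Type*} [Fintype ι] [DecidableEq ι] [Fintype α]
    [Nonempty α] [AddCommMonoid M] [Module ℚ≥0 M] (j : ι) (Φ : (ι → α) → α → M)
    (hΦ : ∀ ω a, Φ (Function.update ω j a) = Φ ω) :
    𝔼 ω, 𝔼 a, Φ ω a = 𝔼 ω, Φ ω (ω j) := by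
  set e : (ι → α) × α → (ι → α) × α := fun p => (Function.update p.1 j p.2, p.1 j)
  have he : Function.Involutive e := fun p => by
    simp [e, Function.update_idem, Function.update_eq_self]
  calc 𝔼 ω, 𝔼 a, Φ ω a = 𝔼 p : (ι → α) × α, Φ p.1 p.2 := by
        rw [← univ_product_univ, expect_product']
    _ = 𝔼 p : (ι → α) × α, Φ p.1 (p.1 j) :=
        Fintype.expect_bijective e he.bijective _ _ fun p => by simp [e, hΦ]
    _ = 𝔼 ω, 𝔼 _a : α, Φ ω (ω j) := by
        rw [← univ_product_univ]
        exact expect_product' univ univ fun ω (_ : α) => Φ ω (ω j)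
    _ = 𝔼 ω, Φ ω (ω j) := by simp only [Fintype.expect_const]

theorem iterate_update_of_le {m : ℕ} {α X : Type*} (T : α → X → X) (x : (Fin m → α) → ℕ → X)
    {x0 : X} (hx0 : ∀ ω, x ω 0 = x0) (hstep : ∀ ω (k : Fin m), x ω (k + 1) = T (ω k) (x ω k))
    (ω : Fin m → α) (j : Fin m) (a : α) {k : ℕ} (hk : k ≤ j) :
    x (Function.update ω j a) k = x ω k := by
  induction k with
  | zero => rw [hx0, hx0]
  | succ k ih =>
    have hkj : k < j := hk
    rw [show k = ((⟨k, hkj.trans j.isLt⟩ : Fin m) : ℕ) from rfl, hstep, hstep,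
      ih hkj.le, Function.update_of_ne (Fin.ne_of_lt hkj)]

theorem epoch_bound_of_step {m : ℕ} (hm : 2 ≤ m) {L β D e : ℝ} {a b : ℕ → ℝ} (hβ : 3 < β)
    (hstep : ∀ k < m, (β - 1) * a (k + 1) + L * β * (β - 1) / 2 * b (k + 1)
      ≤ L * β * (β - 1) / 2 * b k + 2 * a k + 2 * D)
    (havg : ((m : ℝ) - 1) * e ≤ ∑ k ∈ range (m - 1), a (k + 1)) :
    (1 - 2 / (β - 1)) * e + 1 / ((m : ℝ) - 1) * a m
      ≤ 2 * m / ((β - 1) * ((m : ℝ) - 1)) * D + 2 / ((β - 1) * ((m : ℝ) - 1)) * a 0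
        + L * β / (2 * ((m : ℝ) - 1)) * (b 0 - b m) := by
  set C := L * β * (β - 1) / 2
  obtain ⟨p, rfl⟩ : ∃ p, m = p + 1 := ⟨m - 1, by omega⟩
  rw [Nat.add_sub_cancel] at havg
  set S := ∑ k ∈ range p, a (k + 1)
  push_cast at havg ⊢
  rw [add_sub_cancel_right] at havg ⊢
  have hp : (0 : ℝ) < p := by
    have : (1 : ℝ) ≤ p := by exact_mod_cast (by omega : 1 ≤ p)
    linarith
  have htelescope : (β - 1) * (S + a (p + 1)) - 2 * (S + a 0) + C * (b (p + 1) - b 0)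
      ≤ (p + 1) * (2 * D) := by
    have hle : ∀ k ∈ range (p + 1),
        (β - 1) * a (k + 1) - 2 * a k + C * (b (k + 1) - b k) ≤ 2 * D := fun k hk => by
      linarith [hstep k (mem_range.1 hk)]
    have := sum_le_sum hle
    rw [sum_add_distrib, sum_sub_distrib, ← mul_sum, ← mul_sum, ← mul_sum, sum_range_succ,
      sum_range_succ', sum_range_sub, sum_const, card_range, nsmul_eq_mul] at this
    push_cast at this
    linarith
  have hsnapshot : (β - 3) * (p * e) ≤ (β - 3) * S :=
    mul_le_mul_of_nonneg_left havg (by linarith)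
  have hβ1 : 0 < β - 1 := by linarith
  have hpos : 0 < (β - 1) * p := by positivity
  rw [← mul_le_mul_iff_left₀ hpos]
  have hlhs : ((1 - 2 / (β - 1)) * e + 1 / (p : ℝ) * a (p + 1)) * ((β - 1) * p)
      = (β - 3) * (p * e) + (β - 1) * a (p + 1) := by
    field_simp
    ring
  have hrhs : (2 * (p + 1) / ((β - 1) * p) * D + 2 / ((β - 1) * p) * a 0
        + L * β / (2 * p) * (b 0 - b (p + 1))) * ((β - 1) * p)
      = (p + 1) * (2 * D) + 2 * a 0 + C * (b 0 - b (p + 1)) := by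
    simp only [C]
    field_simp
  rw [hlhs, hrhs]
  linarith

section InnerProductSpace

variable {E : Type*} [NormedAddCommGroup E] [InnerProductSpace ℝ E] {ι : Type*} [Fintype ι]

theorem sum_norm_sub_sq_le_sum_norm_sq (v : ι → E) {w : E}
    (hv : ∑ i, v i = (Fintype.card ι : ℝ) • w) :
    ∑ i, ‖v i - w‖ ^ 2 ≤ ∑ i, ‖v i‖ ^ 2 := by
  have hexpand : ∑ i, ‖v i - w‖ ^ 2 = ∑ i, ‖v i‖ ^ 2 - Fintype.card ι * ‖w‖ ^ 2 := by
    simp only [norm_sub_sq_real, sum_add_distrib, sum_sub_distrib, ← mul_sum, ← sum_inner, hv,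
      real_inner_smul_left, real_inner_self_eq_norm_sq, sum_const, card_univ, nsmul_eq_mul]
    ring
  rw [hexpand]
  have : (0 : ℝ) ≤ Fintype.card ι * ‖w‖ ^ 2 := by positivity
  linarith

section Average

variable {f : ι → E → ℝ} {G : ι → E → E} {F : E → ℝ} {GF : E → E} {L : ℝ}

theorem ConvexOn.mul_expect_average_sub_le {Ω : Type*} [Fintype Ω]
    (hF : ConvexOn ℝ Set.univ F) {m : ℕ} (hm : 2 ≤ m) (x : Ω → ℕ → E) (xt : Ω → E)
    (hxt : ∀ ω, xt ω = (1 / ((m : ℝ) - 1)) • ∑ k ∈ range (m - 1), x ω (k + 1)) (c : ℝ) :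
    ((m : ℝ) - 1) * 𝔼 ω, (F (xt ω) - c) ≤ ∑ k ∈ range (m - 1), 𝔼 ω, (F (x ω (k + 1)) - c) := by
  have hm1 : (0 : ℝ) < (m : ℝ) - 1 := by
    have : (2 : ℝ) ≤ m := by exact_mod_cast hm
    linarith
  have hcard : (#(range (m - 1)) : ℝ) = (m : ℝ) - 1 := by
    rw [card_range, Nat.cast_sub (by omega), Nat.cast_one]
  rw [mul_expect, ← expect_sum_comm]
  refine expect_le_expect fun ω _ => ?_
  have hjensen : F (xt ω) ≤ ∑ k ∈ range (m - 1), (1 / ((m : ℝ) - 1)) • F (x ω (k + 1)) := by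
    rw [hxt, smul_sum]
    refine hF.map_sum_le (fun _ _ => by positivity) ?_ fun _ _ => Set.mem_univ _
    rw [sum_const, nsmul_eq_mul, hcard]
    field_simp
  rw [← smul_sum, smul_eq_mul, one_div, le_inv_mul_iff₀ hm1] at hjensen
  rw [sum_sub_distrib, sum_const, nsmul_eq_mul, hcard]
  linarith

theorem convexOn_average [Nonempty ι] (hconv : ∀ i, ConvexOn ℝ Set.univ (f i))
    (hF : ∀ z, ∑ i, f i z = Fintype.card ι * F z) : ConvexOn ℝ Set.univ F := by
  have hcard : (Fintype.card ι : ℝ) ≠ 0 := by positivity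
  have := (ConvexOn.fun_sum (s := univ) (fun i _ => hconv i) convex_univ).smul
    (inv_nonneg.2 (Nat.cast_nonneg (Fintype.card ι)))
  simpa only [smul_eq_mul, hF, inv_mul_cancel_left₀ hcard] using this

theorem lipschitz_average [Nonempty ι] (hlip : ∀ i p q, ‖G i p - G i q‖ ≤ L * ‖p - q‖)
    (hGF : ∀ z, ∑ i, G i z = (Fintype.card ι : ℝ) • GF z) (p q : E) :
    ‖GF p - GF q‖ ≤ L * ‖p - q‖ := by
  have hcard : (0 : ℝ) < Fintype.card ι := by positivity
  have h : (Fintype.card ι : ℝ) * ‖GF p - GF q‖ ≤ Fintype.card ι * (L * ‖p - q‖) := by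
    calc (Fintype.card ι : ℝ) * ‖GF p - GF q‖ = ‖∑ i, (G i p - G i q)‖ := by
          rw [sum_sub_distrib, hGF, hGF, ← smul_sub, norm_smul, Real.norm_natCast]
      _ ≤ ∑ i, ‖G i p - G i q‖ := norm_sum_le _ _
      _ ≤ ∑ _i : ι, L * ‖p - q‖ := sum_le_sum fun i _ => hlip i p q
      _ = Fintype.card ι * (L * ‖p - q‖) := by rw [sum_const, card_univ, nsmul_eq_mul]
  exact le_of_mul_le_mul_left h hcard

end Average

variable [CompleteSpace E]

section SmoothConvex

variable {g : E → ℝ} {G : E → E} {L : ℝ}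

theorem HasGradientAt.hasDerivAt_comp_add_smul {a v g' : E} {t : ℝ}
    (hg : HasGradientAt g g' (a + t • v)) :
    HasDerivAt (fun s : ℝ => g (a + s • v)) ⟪g', v⟫ t := by
  have hline : HasDerivAt (fun s : ℝ => a + s • v) v t := by
    simpa using ((hasDerivAt_id t).smul_const v).const_add a
  simpa [Function.comp_def] using hg.hasFDerivAt.comp_hasDerivAt t hline

theorem le_add_inner_add_of_lipschitz_gradient (hG : ∀ z, HasGradientAt g (G z) z)
    (hlip : ∀ p q, ‖G p - G q‖ ≤ L * ‖p - q‖) (a b : E) :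
    g b ≤ g a + ⟪G a, b - a⟫ + L / 2 * ‖b - a‖ ^ 2 := by
  set v := b - a
  set h : ℝ → ℝ := fun t => g (a + t • v) - t * ⟪G a, v⟫ - L / 2 * t ^ 2 * ‖v‖ ^ 2
  have hderiv : ∀ t, HasDerivAt h (⟪G (a + t • v) - G a, v⟫ - L * t * ‖v‖ ^ 2) t := by
    intro t
    have := (((hG (a + t • v)).hasDerivAt_comp_add_smul).sub
      ((hasDerivAt_id t).mul_const ⟪G a, v⟫)).sub
      (((hasDerivAt_pow 2 t).const_mul (L / 2)).mul_const (‖v‖ ^ 2))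
    refine this.congr_deriv ?_
    rw [inner_sub_left]
    ring
  have hanti : AntitoneOn h (Set.Ici 0) := by
    refine antitoneOn_of_hasDerivWithinAt_nonpos (convex_Ici 0)
      (fun t _ => (hderiv t).continuousAt.continuousWithinAt)
      (fun t _ => (hderiv t).hasDerivWithinAt) fun t ht => ?_
    rw [interior_Ici] at ht
    calc ⟪G (a + t • v) - G a, v⟫ - L * t * ‖v‖ ^ 2
        ≤ ‖G (a + t • v) - G a‖ * ‖v‖ - L * t * ‖v‖ ^ 2 := by
          gcongr; exact real_inner_le_norm _ _
      _ ≤ L * ‖t • v‖ * ‖v‖ - L * t * ‖v‖ ^ 2 := by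
          gcongr; simpa using hlip (a + t • v) a
      _ = 0 := by
          rw [norm_smul, Real.norm_of_nonneg (le_of_lt ht)]; ring
  have := hanti (Set.mem_Ici.2 le_rfl) (Set.mem_Ici.2 zero_le_one) zero_le_one
  simp only [h, v, one_smul, zero_smul, add_zero, add_sub_cancel] at this
  linarith

theorem ConvexOn.add_inner_le (hg : ConvexOn ℝ Set.univ g) (hG : ∀ z, HasGradientAt g (G z) z)
    (a b : E) : g a + ⟪G a, b - a⟫ ≤ g b := by
  have hline : ConvexOn ℝ Set.univ fun t : ℝ => g (a + t • (b - a)) := by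
    have h := hg.comp_affineMap (AffineMap.lineMap a b)
    have hcomp : g ∘ AffineMap.lineMap a b = fun t : ℝ => g (a + t • (b - a)) := by
      ext t
      simp [AffineMap.lineMap_apply, add_comm]
    simpa [hcomp] using h
  have h0 : HasDerivAt (fun t : ℝ => g (a + t • (b - a))) ⟪G a, b - a⟫ 0 := by
    simpa using (hG (a + (0 : ℝ) • (b - a))).hasDerivAt_comp_add_smul
  have := hline.le_slope_of_hasDerivAt (Set.mem_univ 0) (Set.mem_univ 1) one_pos h0
  simp only [slope_def_field, one_smul, zero_smul, add_zero, add_sub_cancel] at this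
  linarith

theorem norm_sq_le_of_lipschitz_gradient (hG : ∀ z, HasGradientAt g (G z) z) (hL : 0 < L)
    (hlip : ∀ p q, ‖G p - G q‖ ≤ L * ‖p - q‖) {b : E} (hmin : ∀ z, g b ≤ g z) (a : E) :
    ‖G a‖ ^ 2 ≤ 2 * L * (g a - g b) := by
  have hstep := le_add_inner_add_of_lipschitz_gradient hG hlip a (a - L⁻¹ • G a)
  have hinner : ⟪G a, a - L⁻¹ • G a - a⟫ = -(L⁻¹ * ‖G a‖ ^ 2) := by
    rw [sub_sub_cancel_left, inner_neg_right, real_inner_smul_right, real_inner_self_eq_norm_sq]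
  have hnorm : ‖a - L⁻¹ • G a - a‖ ^ 2 = L⁻¹ ^ 2 * ‖G a‖ ^ 2 := by
    rw [sub_sub_cancel_left, norm_neg, norm_smul, Real.norm_of_nonneg (inv_nonneg.2 hL.le)]
    ring
  rw [hinner, hnorm] at hstep
  have hdescent : g b ≤ g a - ‖G a‖ ^ 2 / (2 * L) := by
    calc g b ≤ g (a - L⁻¹ • G a) := hmin _
      _ ≤ _ := hstep
      _ = g a - ‖G a‖ ^ 2 / (2 * L) := by field_simp; ring
  rw [le_sub_iff_add_le, ← le_sub_iff_add_le', div_le_iff₀ (by positivity)] at hdescent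
  linarith

theorem ConvexOn.norm_sub_sq_le_of_lipschitz_gradient (hg : ConvexOn ℝ Set.univ g)
    (hG : ∀ z, HasGradientAt g (G z) z) (hL : 0 < L)
    (hlip : ∀ p q, ‖G p - G q‖ ≤ L * ‖p - q‖) (a b : E) :
    ‖G a - G b‖ ^ 2 ≤ 2 * L * (g a - g b - ⟪G b, a - b⟫) := by
  -- tilting `g` by the linear form `⟪G b, ·⟫` makes `b` a minimizer
  set φ : E → ℝ := fun z => g z - ⟪G b, z⟫
  have hinner : ∀ z, HasGradientAt (fun w => ⟪G b, w⟫) (G b) z := fun z => by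
    rw [hasGradientAt_iff_hasFDerivAt]
    exact (InnerProductSpace.toDual ℝ E (G b)).hasFDerivAt
  have hφG : ∀ z, HasGradientAt φ (G z - G b) z := fun z => by
    rw [hasGradientAt_iff_hasFDerivAt, map_sub]
    exact (hG z).hasFDerivAt.sub (hinner z).hasFDerivAt
  have hφconv : ConvexOn ℝ Set.univ φ := by
    have hlin : ConvexOn ℝ Set.univ fun z : E => -⟪G b, z⟫ :=
      (-(innerₛₗ ℝ (G b))).convexOn convex_univ
    exact (hg.add hlin).congr fun z _ => (sub_eq_add_neg _ _).symm
  have hφmin : ∀ z, φ b ≤ φ z := fun z => by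
    simpa using hφconv.add_inner_le hφG b z
  have hφlip : ∀ p q, ‖(G p - G b) - (G q - G b)‖ ≤ L * ‖p - q‖ := fun p q => by
    simpa using hlip p q
  have := norm_sq_le_of_lipschitz_gradient hφG hL hφlip hφmin a
  rw [inner_sub_right]
  linarith

theorem HasGradientAt.eq_zero_of_forall_le {x : E} (hg : HasGradientAt g (G x) x)
    (hmin : ∀ z, g x ≤ g z) : G x = 0 := by
  have hloc : IsLocalMin g x := Filter.Eventually.of_forall hmin
  simpa using hloc.hasFDerivAt_eq_zero hg.hasFDerivAt

end SmoothConvex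

variable {f : ι → E → ℝ} {G : ι → E → E} {F : E → ℝ} {GF : E → E} {L β η : ℝ}

theorem hasGradientAt_average [Nonempty ι] (hG : ∀ i z, HasGradientAt (f i) (G i z) z)
    (hF : ∀ z, ∑ i, f i z = Fintype.card ι * F z)
    (hGF : ∀ z, ∑ i, G i z = (Fintype.card ι : ℝ) • GF z) (z : E) :
    HasGradientAt F (GF z) z := by
  have hcard : (Fintype.card ι : ℝ) ≠ 0 := by positivity
  have hsum : HasGradientAt (fun w => ∑ i, f i w) (∑ i, G i z) z := by
    rw [hasGradientAt_iff_hasFDerivAt, map_sum]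
    exact HasFDerivAt.fun_sum fun i _ => (hG i z).hasFDerivAt
  have hscaled := hsum.hasFDerivAt.const_mul (Fintype.card ι : ℝ)⁻¹
  rw [hGF, map_smul, smul_smul, inv_mul_cancel₀ hcard, one_smul] at hscaled
  simp only [hF, inv_mul_cancel_left₀ hcard] at hscaled
  exact hasGradientAt_iff_hasFDerivAt.2 hscaled

theorem sum_norm_gradient_sub_sq_le (hconv : ∀ i, ConvexOn ℝ Set.univ (f i))
    (hG : ∀ i z, HasGradientAt (f i) (G i z) z) (hL : 0 < L)
    (hlip : ∀ i p q, ‖G i p - G i q‖ ≤ L * ‖p - q‖)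
    (hF : ∀ z, ∑ i, f i z = Fintype.card ι * F z) {xstar : E} (hstar : ∑ i, G i xstar = 0)
    (z : E) :
    ∑ i, ‖G i z - G i xstar‖ ^ 2 ≤ 2 * L * Fintype.card ι * (F z - F xstar) := by
  calc ∑ i, ‖G i z - G i xstar‖ ^ 2
      ≤ ∑ i, 2 * L * (f i z - f i xstar - ⟪G i xstar, z - xstar⟫) := sum_le_sum fun i _ =>
        (hconv i).norm_sub_sq_le_of_lipschitz_gradient (hG i) hL (hlip i) z xstar
    _ = 2 * L * (∑ i, f i z - ∑ i, f i xstar - ⟪∑ i, G i xstar, z - xstar⟫) := by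
        rw [← mul_sum, sum_sub_distrib, sum_sub_distrib, sum_inner]
    _ = 2 * L * Fintype.card ι * (F z - F xstar) := by
        rw [hF, hF, hstar, inner_zero_left]
        ring

theorem sum_norm_svrg_sq_le (hconv : ∀ i, ConvexOn ℝ Set.univ (f i))
    (hG : ∀ i z, HasGradientAt (f i) (G i z) z) (hL : 0 < L)
    (hlip : ∀ i p q, ‖G i p - G i q‖ ≤ L * ‖p - q‖)
    (hF : ∀ z, ∑ i, f i z = Fintype.card ι * F z)
    (hGF : ∀ z, ∑ i, G i z = (Fintype.card ι : ℝ) • GF z) {xstar : E} (hstar : GF xstar = 0)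
    (xtilde y : E) :
    ∑ i, ‖G i y - G i xtilde + GF xtilde‖ ^ 2
      ≤ 4 * L * Fintype.card ι * ((F y - F xstar) + (F xtilde - F xstar)) := by
  have hsum_star : ∑ i, G i xstar = 0 := by rw [hGF, hstar, smul_zero]
  have hbound := sum_norm_gradient_sub_sq_le hconv hG hL hlip hF hsum_star
  have hsplit : ∀ i, ‖G i y - G i xtilde + GF xtilde‖ ^ 2
      ≤ 2 * ‖G i y - G i xstar‖ ^ 2 + 2 * ‖(G i xtilde - G i xstar) - GF xtilde‖ ^ 2 := by
    intro i
    have h := parallelogram_law_with_norm ℝ (G i y - G i xstar)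
      ((G i xtilde - G i xstar) - GF xtilde)
    have hnonneg := sq_nonneg ‖(G i y - G i xstar) + ((G i xtilde - G i xstar) - GF xtilde)‖
    rw [show (G i y - G i xstar) - ((G i xtilde - G i xstar) - GF xtilde)
      = G i y - G i xtilde + GF xtilde by abel] at h
    linarith
  have hcentred : ∑ i, ‖(G i xtilde - G i xstar) - GF xtilde‖ ^ 2
      ≤ ∑ i, ‖G i xtilde - G i xstar‖ ^ 2 :=
    sum_norm_sub_sq_le_sum_norm_sq _ (by rw [sum_sub_distrib, hGF, hsum_star, sub_zero])
  calc ∑ i, ‖G i y - G i xtilde + GF xtilde‖ ^ 2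
      ≤ 2 * ∑ i, ‖G i y - G i xstar‖ ^ 2 + 2 * ∑ i, ‖(G i xtilde - G i xstar) - GF xtilde‖ ^ 2 := by
        rw [mul_sum, mul_sum, ← sum_add_distrib]
        exact sum_le_sum fun i _ => hsplit i
    _ ≤ _ := by linarith [hbound y, hbound xtilde]

theorem inexact_gradient_step_le (hFconv : ConvexOn ℝ Set.univ F)
    (hGF : ∀ z, HasGradientAt F (GF z) z) (hlip : ∀ p q, ‖GF p - GF q‖ ≤ L * ‖p - q‖)
    (hη : 0 ≤ η) (xstar y v : E) :
    2 * η * (F (y - η • v) - F xstar) + ‖xstar - (y - η • v)‖ ^ 2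
      ≤ ‖xstar - y‖ ^ 2 + 2 * η * ⟪GF y - v, y - xstar⟫ - 2 * η ^ 2 * ⟪GF y, v⟫
        + (η ^ 2 + L * η ^ 3) * ‖v‖ ^ 2 := by
  have hdescent := le_add_inner_add_of_lipschitz_gradient hGF hlip y (y - η • v)
  have hconvex := hFconv.add_inner_le hGF y xstar
  rw [sub_sub_cancel_left, norm_neg, norm_smul, Real.norm_of_nonneg hη, inner_neg_right,
    real_inner_smul_right] at hdescent
  have hdist : ‖xstar - (y - η • v)‖ ^ 2
      = ‖xstar - y‖ ^ 2 - 2 * η * ⟪v, y - xstar⟫ + η ^ 2 * ‖v‖ ^ 2 := by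
    rw [show xstar - (y - η • v) = η • v - (y - xstar) by abel, norm_sub_sq_real, norm_smul,
      Real.norm_of_nonneg hη, real_inner_smul_left, ← neg_sub y xstar, norm_neg]
    ring
  rw [← neg_sub y xstar, inner_neg_right] at hconvex
  rw [hdist, inner_sub_left]
  linarith [mul_le_mul_of_nonneg_left hdescent (by positivity : 0 ≤ 2 * η),
    mul_le_mul_of_nonneg_left hconvex (by positivity : 0 ≤ 2 * η)]

theorem sum_unbiased_gradient_step_le (hFconv : ConvexOn ℝ Set.univ F)
    (hGF : ∀ z, HasGradientAt F (GF z) z) (hlip : ∀ p q, ‖GF p - GF q‖ ≤ L * ‖p - q‖)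
    (hη : 0 ≤ η) (xstar y : E) (v : ι → E) (hv : ∑ i, v i = (Fintype.card ι : ℝ) • GF y) :
    ∑ i, (2 * η * (F (y - η • v i) - F xstar) + ‖xstar - (y - η • v i)‖ ^ 2)
      ≤ Fintype.card ι * ‖xstar - y‖ ^ 2 + (η ^ 2 + L * η ^ 3) * ∑ i, ‖v i‖ ^ 2 := by
  have hcross : ∑ i, ⟪GF y - v i, y - xstar⟫ = 0 := by
    rw [← sum_inner, sum_sub_distrib, hv, sum_const, card_univ, ← Nat.cast_smul_eq_nsmul ℝ,
      sub_self, inner_zero_left]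
  have hbias : ∑ i, ⟪GF y, v i⟫ = Fintype.card ι * ‖GF y‖ ^ 2 := by
    rw [← inner_sum, hv, real_inner_smul_right, real_inner_self_eq_norm_sq]
  calc ∑ i, (2 * η * (F (y - η • v i) - F xstar) + ‖xstar - (y - η • v i)‖ ^ 2)
      ≤ ∑ i, (‖xstar - y‖ ^ 2 + 2 * η * ⟪GF y - v i, y - xstar⟫ - 2 * η ^ 2 * ⟪GF y, v i⟫
          + (η ^ 2 + L * η ^ 3) * ‖v i‖ ^ 2) :=
        sum_le_sum fun i _ => inexact_gradient_step_le hFconv hGF hlip hη xstar y (v i)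
    _ = Fintype.card ι * ‖xstar - y‖ ^ 2 - 2 * η ^ 2 * (Fintype.card ι * ‖GF y‖ ^ 2)
          + (η ^ 2 + L * η ^ 3) * ∑ i, ‖v i‖ ^ 2 := by
        rw [sum_add_distrib, sum_sub_distrib, sum_add_distrib, ← mul_sum, ← mul_sum, ← mul_sum,
          hcross, hbias, sum_const, card_univ, nsmul_eq_mul]
        ring
    _ ≤ _ := by
        have : 0 ≤ 2 * η ^ 2 * (Fintype.card ι * ‖GF y‖ ^ 2) := by positivity
        linarith

theorem expect_svrg_step_le [Nonempty ι] (hL : 0 < L) (hβ : 1 < β) (hη : η = 1 / (L * β))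
    (hconv : ∀ i, ConvexOn ℝ Set.univ (f i)) (hG : ∀ i z, HasGradientAt (f i) (G i z) z)
    (hlip : ∀ i p q, ‖G i p - G i q‖ ≤ L * ‖p - q‖)
    (hF : ∀ z, ∑ i, f i z = Fintype.card ι * F z)
    (hGF : ∀ z, ∑ i, G i z = (Fintype.card ι : ℝ) • GF z)
    {xstar : E} (hmin : ∀ z, F xstar ≤ F z) (xtilde y : E) :
    𝔼 i, ((β - 1) * (F (y - η • (G i y - G i xtilde + GF xtilde)) - F xstar)
        + L * β * (β - 1) / 2 * ‖xstar - (y - η • (G i y - G i xtilde + GF xtilde))‖ ^ 2)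
      ≤ L * β * (β - 1) / 2 * ‖xstar - y‖ ^ 2 + 2 * (F y - F xstar)
        + 2 * (F xtilde - F xstar) := by
  set C := L * β * (β - 1) / 2
  set v : ι → E := fun i => G i y - G i xtilde + GF xtilde
  set n : ℝ := (Fintype.card ι : ℝ)
  have hn : 0 < n := by positivity
  have hη0 : 0 ≤ η := by rw [hη]; positivity
  have hFgrad := hasGradientAt_average hG hF hGF
  have hv : ∑ i, v i = n • GF y := by
    simp only [v, sum_add_distrib, sum_sub_distrib, hGF, sum_const, card_univ,
      ← Nat.cast_smul_eq_nsmul ℝ, n]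
    abel
  have hstep := sum_unbiased_gradient_step_le (convexOn_average hconv hF) hFgrad
    (lipschitz_average hlip hGF) hη0 xstar y v hv
  have hvar := sum_norm_svrg_sq_le hconv hG hL hlip hF hGF
    ((hFgrad xstar).eq_zero_of_forall_le hmin) xtilde y
  have hgap : 0 ≤ (F y - F xstar) + (F xtilde - F xstar) := by
    linarith [hmin y, hmin xtilde]
  have hCη : C * (2 * η) = β - 1 := by
    simp only [C, hη]; field_simp
  have hweight : C * (η ^ 2 + L * η ^ 3) * (4 * L) ≤ 2 := by
    have : C * (η ^ 2 + L * η ^ 3) * (4 * L) = 2 - 2 / β ^ 2 := by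
      simp only [C, hη]; field_simp; ring
    rw [this]
    have : 0 < 2 / β ^ 2 := by positivity
    linarith
  rw [Fintype.expect_eq_sum_div_card, div_le_iff₀ hn]
  calc ∑ i, ((β - 1) * (F (y - η • v i) - F xstar) + C * ‖xstar - (y - η • v i)‖ ^ 2)
      = C * ∑ i, (2 * η * (F (y - η • v i) - F xstar) + ‖xstar - (y - η • v i)‖ ^ 2) := by
        rw [mul_sum]
        refine sum_congr rfl fun i _ => ?_
        rw [← hCη]
        ring
    _ ≤ C * (n * ‖xstar - y‖ ^ 2 + (η ^ 2 + L * η ^ 3) * ∑ i, ‖v i‖ ^ 2) :=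
        mul_le_mul_of_nonneg_left hstep (by positivity)
    _ ≤ C * (n * ‖xstar - y‖ ^ 2
          + (η ^ 2 + L * η ^ 3) * (4 * L * n * ((F y - F xstar) + (F xtilde - F xstar)))) := by
        gcongr
    _ = C * n * ‖xstar - y‖ ^ 2 + C * (η ^ 2 + L * η ^ 3) * (4 * L)
          * (n * ((F y - F xstar) + (F xtilde - F xstar))) := by ring
    _ ≤ C * n * ‖xstar - y‖ ^ 2 + 2 * (n * ((F y - F xstar) + (F xtilde - F xstar))) := by
        gcongr
    _ = _ := by ring

theorem expect_svrg_epoch_step_le [Nonempty ι] (hL : 0 < L) (hβ : 1 < β) (hη : η = 1 / (L * β))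
    (hconv : ∀ i, ConvexOn ℝ Set.univ (f i)) (hG : ∀ i z, HasGradientAt (f i) (G i z) z)
    (hlip : ∀ i p q, ‖G i p - G i q‖ ≤ L * ‖p - q‖)
    (hF : ∀ z, ∑ i, f i z = Fintype.card ι * F z)
    (hGF : ∀ z, ∑ i, G i z = (Fintype.card ι : ℝ) • GF z)
    {xstar : E} (hmin : ∀ z, F xstar ≤ F z) {m : ℕ} {xtilde x0 : E}
    (x : (Fin m → ι) → ℕ → E) (hx0 : ∀ ω, x ω 0 = x0)
    (hstep : ∀ ω (k : Fin m),
      x ω (k + 1) = x ω k - η • (G (ω k) (x ω k) - G (ω k) xtilde + GF xtilde))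
    (k : Fin m) :
    (β - 1) * 𝔼 ω, (F (x ω (k + 1)) - F xstar)
        + L * β * (β - 1) / 2 * 𝔼 ω, ‖xstar - x ω (k + 1)‖ ^ 2
      ≤ L * β * (β - 1) / 2 * 𝔼 ω, ‖xstar - x ω k‖ ^ 2 + 2 * 𝔼 ω, (F (x ω k) - F xstar)
        + 2 * (F xtilde - F xstar) := by
  classical
  set T : ι → E → E := fun i y => y - η • (G i y - G i xtilde + GF xtilde)
  set H : E → ι → ℝ := fun y i =>
    (β - 1) * (F (T i y) - F xstar) + L * β * (β - 1) / 2 * ‖xstar - T i y‖ ^ 2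
  -- the `k`-th iterate does not depend on the `k`-th index, which is drawn afresh
  have hfresh : 𝔼 ω, 𝔼 i, H (x ω k) i = 𝔼 ω, H (x ω k) (ω k) :=
    expect_expect_eq_expect_apply k (fun ω i => H (x ω k) i) fun ω a => by
      simp only [iterate_update_of_le T x hx0 hstep ω k a le_rfl]
  calc (β - 1) * 𝔼 ω, (F (x ω (k + 1)) - F xstar)
        + L * β * (β - 1) / 2 * 𝔼 ω, ‖xstar - x ω (k + 1)‖ ^ 2
      = 𝔼 ω, H (x ω k) (ω k) := by
        simp only [mul_expect, ← expect_add_distrib, H, T, hstep]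
    _ = 𝔼 ω, 𝔼 i, H (x ω k) i := hfresh.symm
    _ ≤ 𝔼 ω, (L * β * (β - 1) / 2 * ‖xstar - x ω k‖ ^ 2 + 2 * (F (x ω k) - F xstar)
          + 2 * (F xtilde - F xstar)) :=
        expect_le_expect fun ω _ =>
          expect_svrg_step_le hL hβ hη hconv hG hlip hF hGF hmin xtilde (x ω k)
    _ = _ := by
        rw [expect_add_distrib, expect_add_distrib, ← mul_expect, ← mul_expect,
          Fintype.expect_const]

end InnerProductSpace

/-- epoch bound for VR-SGD with Option II (snapshot = average of the first m-1 iterates);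
expectations over the epoch's random indices are uniform averages over
`ω : Fin m → Fin n`. -/
theorem stmt_11 (d n m : ℕ) (hn : 0 < n) (hm : 2 ≤ m)
    (L β η : ℝ) (hL : 0 < L) (hβ : 3 < β) (hη : η = 1 / (L * β))
    (f : Fin n → EuclideanSpace ℝ (Fin d) → ℝ)
    (hconv : ∀ i, ConvexOn ℝ Set.univ (f i))
    (hdiff : ∀ i, Differentiable ℝ (f i))
    (hlip : ∀ i x y, ‖gradient (f i) x - gradient (f i) y‖ ≤ L * ‖x - y‖)
    (favg : EuclideanSpace ℝ (Fin d) → ℝ)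
    (hfavg : ∀ x, favg x = (1 / n : ℝ) * ∑ i, f i x)
    (xstar : EuclideanSpace ℝ (Fin d)) (hmin : ∀ x, favg xstar ≤ favg x)
    (xtprev x0 : EuclideanSpace ℝ (Fin d))
    (x : (Fin m → Fin n) → ℕ → EuclideanSpace ℝ (Fin d))
    (hx0 : ∀ ω, x ω 0 = x0)
    (hstep : ∀ ω (k : Fin m),
      x ω ((k : ℕ) + 1) = x ω (k : ℕ) -
        η • (gradient (f (ω k)) (x ω (k : ℕ)) - gradient (f (ω k)) xtprev
              + gradient favg xtprev))
    (xt : (Fin m → Fin n) → EuclideanSpace ℝ (Fin d))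
    (hxt : ∀ ω, xt ω = (1 / ((m : ℝ) - 1)) • ∑ k ∈ Finset.range (m - 1), x ω (k + 1)) :
    (1 - 2 / (β - 1)) *
        ((Fintype.card (Fin m → Fin n) : ℝ)⁻¹ *
          ∑ ω : Fin m → Fin n, (favg (xt ω) - favg xstar))
      + (1 / ((m : ℝ) - 1)) *
        ((Fintype.card (Fin m → Fin n) : ℝ)⁻¹ *
          ∑ ω : Fin m → Fin n, (favg (x ω m) - favg xstar))
    ≤ (2 * m / ((β - 1) * ((m : ℝ) - 1))) * (favg xtprev - favg xstar)
      + (2 / ((β - 1) * ((m : ℝ) - 1))) * (favg x0 - favg xstar)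
      + (L * β / (2 * ((m : ℝ) - 1))) *
        ((Fintype.card (Fin m → Fin n) : ℝ)⁻¹ *
          ∑ ω : Fin m → Fin n, (‖xstar - x0‖ ^ 2 - ‖xstar - x ω m‖ ^ 2)) := by
  have : Nonempty (Fin n) := ⟨⟨0, hn⟩⟩
  set G : Fin n → EuclideanSpace ℝ (Fin d) → EuclideanSpace ℝ (Fin d) := fun i => gradient (f i)
  have hG : ∀ i z, HasGradientAt (f i) (G i z) z := fun i z => (hdiff i z).hasGradientAt
  have hF : ∀ z, ∑ i, f i z = Fintype.card (Fin n) * favg z := fun z => by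
    rw [hfavg, Fintype.card_fin, ← mul_assoc, mul_one_div_cancel (by positivity), one_mul]
  have hGF : ∀ z, ∑ i, G i z = (Fintype.card (Fin n) : ℝ) • ((n : ℝ)⁻¹ • ∑ i, G i z) := fun z => by
    rw [Fintype.card_fin, smul_inv_smul₀ (by positivity)]
  rw [(hasGradientAt_average hG hF hGF xtprev).gradient] at hstep
  have hepoch := epoch_bound_of_step hm hβ (a := fun k => 𝔼 ω, (favg (x ω k) - favg xstar))
    (b := fun k => 𝔼 ω, ‖xstar - x ω k‖ ^ 2)
    (fun k hk => expect_svrg_epoch_step_le hL (by linarith) hη hconv hG hlip hF hGF hmin x hx0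
      hstep ⟨k, hk⟩)
    ((convexOn_average hconv hF).mul_expect_average_sub_le hm x xt hxt (favg xstar))
  have hexpect (g : (Fin m → Fin n) → ℝ) :
      𝔼 ω, g ω = (Fintype.card (Fin m → Fin n) : ℝ)⁻¹ * ∑ ω, g ω := by
    rw [Fintype.expect_eq_sum_div_card, inv_mul_eq_div]
  simp only [hx0] at hepoch
  rwa [← expect_sub_distrib, Fintype.expect_const, hexpect, hexpect, hexpect] at hepoch
end
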